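/- Fix integers d ≥ 2 and B ≥ 2. There exists a monotone function ψ: [0,1] → ℝ such that for any function f: [0,1]^d → ℝ, there exists a function g: ℝ → ℝ with f(x_1, ..., x_d) = g(∑_{p=1}^d B^{-p} ψ(x_p)) for all (x_1,...,x_d) ∈ [0,1]^d. -/

import Mathlib

/-!
Take `ψ x = ∑ₖ aₖ qᵏ`, where `aₖ` are the base-`B` digits of `x / 2` and `q = B^-(d+2)`.
Then `∑ₚ ψ(xₚ) / B^(p+1) = ∑ₖ Dₖ qᵏ`, where `Dₖ = ∑ₚ aₖ(xₚ) / B^(p+1)` is a `d`-digit `B`-adic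
fraction in `[0, 1)`; two different values of `Dₖ` differ by at least `B^-d`. Since `q` is so small
that everything beyond the first index where two coefficient sequences differ is negligible, that
index decides the comparison of the sums. Hence `x ↦ ∑ₚ ψ(xₚ) / B^(p+1)` is injective on `[0,1]^d`
and `g = f ∘ (its inverse)` works; the same argument with the digits of `x / 2` themselves shows
that `ψ` is increasing.
-/

open Finset Real

theorem summable_mul_pow_of_abs_le {q M : ℝ} {c : ℕ → ℝ} (hq0 : 0 ≤ q) (hq1 : q < 1)
    (hc : ∀ k, |c k| ≤ M) : Summable fun k => c k * q ^ k :=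
  Summable.of_norm_bounded ((summable_geometric_of_lt_one hq0 hq1).mul_left M) fun k => by
    rw [norm_mul, norm_pow, Real.norm_eq_abs, Real.norm_eq_abs, abs_of_nonneg hq0]
    exact mul_le_mul_of_nonneg_right (hc k) (by positivity)

theorem tsum_mul_pow_pos {q M δ : ℝ} {c : ℕ → ℝ} {m : ℕ} (hq0 : 0 < q) (hq1 : q < 1)
    (hc : ∀ k, |c k| ≤ M) (hzero : ∀ k < m, c k = 0) (hm : δ ≤ c m)
    (hqδ : M * q < δ * (1 - q)) : 0 < ∑' k, c k * q ^ k := by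
  have hs := summable_mul_pow_of_abs_le hq0.le hq1 hc
  have hhead : ∑ k ∈ range (m + 1), c k * q ^ k = c m * q ^ m := by
    rw [sum_range_succ, sum_eq_zero fun k hk => by rw [hzero k (mem_range.1 hk), zero_mul],
      zero_add]
  have htail : -(M * q ^ (m + 1) / (1 - q)) ≤ ∑' k, c (k + (m + 1)) * q ^ (k + (m + 1)) := by
    have hgeom : ∑' k, -(M * q ^ (m + 1)) * q ^ k = -(M * q ^ (m + 1) / (1 - q)) := by
      rw [tsum_mul_left, tsum_geometric_of_lt_one hq0.le hq1]; ring
    rw [← hgeom]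
    have hs' : Summable fun k => c (k + (m + 1)) * q ^ (k + (m + 1)) :=
      (summable_nat_add_iff (f := fun k => c k * q ^ k) (m + 1)).2 hs
    refine ((summable_geometric_of_lt_one hq0.le hq1).mul_left _).tsum_le_tsum (fun k => ?_) hs'
    have hk := neg_le_of_abs_le (hc (k + (m + 1)))
    have hpos : 0 ≤ q ^ (k + (m + 1)) := by positivity
    calc -(M * q ^ (m + 1)) * q ^ k = -M * q ^ (k + (m + 1)) := by ring
      _ ≤ c (k + (m + 1)) * q ^ (k + (m + 1)) := mul_le_mul_of_nonneg_right hk hpos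
  have hgap : M * q ^ (m + 1) / (1 - q) < δ * q ^ m := by
    rw [div_lt_iff₀ (by linarith), pow_succ]
    nlinarith [pow_pos hq0 m]
  rw [← hs.sum_add_tsum_nat_add (m + 1), hhead]
  nlinarith [pow_pos hq0 m]

theorem eq_zero_of_tsum_mul_pow_eq_zero {q M δ : ℝ} {c : ℕ → ℝ} (hq0 : 0 < q) (hq1 : q < 1)
    (hc : ∀ k, |c k| ≤ M) (hsep : ∀ k, c k ≠ 0 → δ ≤ |c k|) (hqδ : M * q < δ * (1 - q))
    (hsum : ∑' k, c k * q ^ k = 0) : c = 0 := by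
  classical
  by_contra hne
  have hex : ∃ k, c k ≠ 0 := Function.ne_iff.1 hne
  set m := Nat.find hex
  have hzero : ∀ k < m, c k = 0 := fun k hk => not_not.1 (Nat.find_min hex hk)
  have hm := hsep m (Nat.find_spec hex)
  rcases (Nat.find_spec hex).lt_or_gt with hneg | hpos
  · have hc' : ∀ k, |(-c) k| ≤ M := fun k => by rw [Pi.neg_apply, abs_neg]; exact hc k
    have := tsum_mul_pow_pos (m := m) hq0 hq1 hc' (fun k hk => by simp [hzero k hk])
      (by rwa [abs_of_neg hneg] at hm) hqδ
    simp only [Pi.neg_apply, neg_mul, tsum_neg, hsum, neg_zero] at this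
    exact this.false
  · have := tsum_mul_pow_pos (m := m) hq0 hq1 hc hzero
      (by rwa [abs_of_pos hpos] at hm) hqδ
    exact (hsum ▸ this).false

theorem Real.exists_digits_lt_of_lt {b : ℕ} [NeZero b] (hb : 1 < b) {x y : ℝ}
    (hx : x ∈ Set.Ico 0 1) (hy : y ∈ Set.Ico 0 1) (hxy : x < y) :
    ∃ m, (∀ k < m, digits x b k = digits y b k) ∧ digits x b m < digits y b m := by
  classical
  have hne : digits x b ≠ digits y b := fun h =>
    hxy.ne (by rw [← ofDigits_digits hb hx, h, ofDigits_digits hb hy])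
  have hex : ∃ m, digits x b m ≠ digits y b m := Function.ne_iff.1 hne
  set m := Nat.find hex
  have hmin : ∀ k < m, digits x b k = digits y b k := fun k hk => not_not.1 (Nat.find_min hex hk)
  refine ⟨m, hmin, lt_of_le_of_ne ?_ (Nat.find_spec hex)⟩
  have hprefix : ∑ i ∈ range m, ofDigitsTerm (digits x b) i
      = ∑ i ∈ range m, ofDigitsTerm (digits y b) i :=
    sum_congr rfl fun i hi => by rw [ofDigitsTerm, ofDigitsTerm, hmin i (mem_range.1 hi)]
  have hfloor : ⌊(b : ℝ) ^ (m + 1) * x⌋₊ ≤ ⌊(b : ℝ) ^ (m + 1) * y⌋₊ :=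
    Nat.floor_le_floor (by gcongr)
  have hpow : (0 : ℝ) < (b : ℝ) ^ (m + 1) := by positivity
  rw [← Nat.cast_le (α := ℝ), ← ofDigits_digits_sum_eq hx, ← ofDigits_digits_sum_eq hy,
    sum_range_succ, sum_range_succ, hprefix, mul_le_mul_iff_right₀ hpow, add_le_add_iff_left,
    ofDigitsTerm, ofDigitsTerm, mul_le_mul_iff_left₀ (inv_pos.2 hpow)] at hfloor
  exact_mod_cast hfloor

theorem Real.cast_digits_le {b : ℕ} [NeZero b] (x : ℝ) (k : ℕ) :
    ((digits x b k : ℕ) : ℝ) ≤ b - 1 := by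
  have h : ((digits x b k : ℕ) : ℝ) + 1 ≤ b := by exact_mod_cast (digits x b k).is_lt
  linarith

theorem Real.abs_cast_digits_sub_le {b : ℕ} [NeZero b] (x y : ℝ) (k : ℕ) :
    |((digits x b k : ℕ) : ℝ) - (digits y b k : ℕ)| ≤ b - 1 :=
  abs_sub_le_of_nonneg_of_le (Nat.cast_nonneg _) (cast_digits_le x k) (Nat.cast_nonneg _)
    (cast_digits_le y k)

noncomputable def finOfDigits {b d : ℕ} (e : Fin d → Fin b) : ℝ :=
  ∑ p : Fin d, ((e p : ℕ) : ℝ) / (b : ℝ) ^ ((p : ℕ) + 1)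

theorem pow_mul_finOfDigits {b d : ℕ} [NeZero b] (e : Fin d → Fin b) :
    (b : ℝ) ^ d * finOfDigits e = (finFunctionFinEquiv (fun i => e i.rev) : ℕ) := by
  have hb : (b : ℝ) ≠ 0 := Nat.cast_ne_zero.2 (NeZero.ne b)
  rw [finFunctionFinEquiv_apply, finOfDigits, mul_sum, ← Equiv.sum_comp Fin.revPerm]
  push_cast
  refine sum_congr rfl fun p _ => ?_
  have hd : (b : ℝ) ^ d = (b : ℝ) ^ ((p.rev : ℕ) + 1) * (b : ℝ) ^ (p : ℕ) := by
    rw [← pow_add, Fin.val_rev]; congr 1; omega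
  rw [Fin.revPerm_apply, hd]
  field_simp

theorem finOfDigits_nonneg {b d : ℕ} (e : Fin d → Fin b) : 0 ≤ finOfDigits e :=
  sum_nonneg fun _ _ => by positivity

theorem finOfDigits_lt_one {b d : ℕ} [NeZero b] (e : Fin d → Fin b) : finOfDigits e < 1 := by
  have hpow : (0 : ℝ) < (b : ℝ) ^ d := pow_pos (Nat.cast_pos.2 (NeZero.pos b)) d
  have hlt : (b : ℝ) ^ d * finOfDigits e < (b : ℝ) ^ d * 1 := by
    rw [pow_mul_finOfDigits, mul_one]; exact_mod_cast (finFunctionFinEquiv _).is_lt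
  exact lt_of_mul_lt_mul_left hlt hpow.le

theorem finOfDigits_injective {b d : ℕ} [NeZero b] :
    Function.Injective (finOfDigits : (Fin d → Fin b) → ℝ) := by
  intro e e' h
  have hrev : (fun i : Fin d => e i.rev) = fun i => e' i.rev := by
    apply finFunctionFinEquiv.injective
    apply Fin.val_injective
    exact_mod_cast
      (pow_mul_finOfDigits e).symm.trans ((congrArg _ h).trans (pow_mul_finOfDigits e'))
  funext p
  simpa using congrFun hrev p.rev

theorem inv_pow_le_abs_finOfDigits_sub {b d : ℕ} [NeZero b] {e e' : Fin d → Fin b}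
    (h : finOfDigits e ≠ finOfDigits e') : ((b : ℝ) ^ d)⁻¹ ≤ |finOfDigits e - finOfDigits e'| := by
  have hpow : (0 : ℝ) < (b : ℝ) ^ d := pow_pos (Nat.cast_pos.2 (NeZero.pos b)) d
  have hne :
      (finFunctionFinEquiv (fun i => e i.rev) : ℤ) ≠ finFunctionFinEquiv (fun i => e' i.rev) :=
    fun hN => h (by
      apply mul_left_cancel₀ hpow.ne'
      rw [pow_mul_finOfDigits, pow_mul_finOfDigits]; exact_mod_cast hN)
  have hone : 1 ≤ (b : ℝ) ^ d * |finOfDigits e - finOfDigits e'| := by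
    rw [← abs_of_pos hpow, ← abs_mul, mul_sub, pow_mul_finOfDigits, pow_mul_finOfDigits]
    exact_mod_cast Int.one_le_abs (sub_ne_zero.2 hne)
  exact (inv_le_iff_one_le_mul₀' hpow).2 hone

/-- Halving puts `[0, 1]` inside `[0, 1)`, where `Real.digits` determines the number. -/
noncomputable def spreadDigits (b : ℕ) [NeZero b] (q x : ℝ) : ℝ :=
  ∑' k, ((digits (x / 2) b k : ℕ) : ℝ) * q ^ k

theorem half_mem_Ico_of_mem_Icc {x : ℝ} (hx : x ∈ Set.Icc (0 : ℝ) 1) : x / 2 ∈ Set.Ico (0 : ℝ) 1 :=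
  ⟨by linarith [hx.1], by linarith [hx.2]⟩

theorem summable_digits_mul_pow {b : ℕ} [NeZero b] {q : ℝ} (hq0 : 0 ≤ q) (hq1 : q < 1) (x : ℝ) :
    Summable fun k => ((digits x b k : ℕ) : ℝ) * q ^ k :=
  summable_mul_pow_of_abs_le hq0 hq1 fun k => by
    rw [abs_of_nonneg (Nat.cast_nonneg _)]; exact cast_digits_le x k

theorem strictMonoOn_spreadDigits {b : ℕ} [NeZero b] (hb : 1 < b) {q : ℝ} (hq0 : 0 < q)
    (hbq : b * q < 1) : StrictMonoOn (spreadDigits b q) (Set.Icc 0 1) := by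
  intro x hx y hy hxy
  have hq1 : q < 1 := by
    have : (1 : ℝ) < b := by exact_mod_cast hb
    nlinarith
  obtain ⟨m, hprefix, hm⟩ := exists_digits_lt_of_lt hb (half_mem_Ico_of_mem_Icc hx)
    (half_mem_Ico_of_mem_Icc hy) (by linarith)
  rw [← sub_pos, spreadDigits, spreadDigits, ← (summable_digits_mul_pow hq0.le hq1 _).tsum_sub
    (summable_digits_mul_pow hq0.le hq1 _)]
  simp_rw [← sub_mul]
  refine tsum_mul_pow_pos (δ := 1) (m := m) hq0 hq1 (abs_cast_digits_sub_le _ _)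
    (fun k hk => by rw [hprefix k hk, sub_self]) ?_ (by linarith)
  have : ((digits (x / 2) b m : ℕ) : ℝ) + 1 ≤ (digits (y / 2) b m : ℕ) := by exact_mod_cast hm
  linarith

theorem sum_spreadDigits_div_pow {b d : ℕ} [NeZero b] {q : ℝ} (hq0 : 0 ≤ q) (hq1 : q < 1)
    (x : Fin d → ℝ) :
    ∑ p : Fin d, spreadDigits b q (x p) / (b : ℝ) ^ ((p : ℕ) + 1)
      = ∑' k, finOfDigits (fun p => digits (x p / 2) b k) * q ^ k := by
  simp_rw [spreadDigits, ← tsum_div_const]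
  rw [← Summable.tsum_finsetSum fun p _ => (summable_digits_mul_pow hq0 hq1 _).div_const _]
  congr 1; funext k
  rw [finOfDigits, sum_mul]
  exact sum_congr rfl fun p _ => by ring

theorem summable_finOfDigits_mul_pow {b d : ℕ} [NeZero b] {q : ℝ} (hq0 : 0 ≤ q) (hq1 : q < 1)
    (e : ℕ → Fin d → Fin b) : Summable fun k => finOfDigits (e k) * q ^ k :=
  summable_mul_pow_of_abs_le hq0 hq1 fun k => by
    rw [abs_of_nonneg (finOfDigits_nonneg _)]; exact (finOfDigits_lt_one _).le

theorem injOn_sum_spreadDigits_div_pow {b d : ℕ} [NeZero b] (hb : 1 < b) {q : ℝ} (hq0 : 0 < q)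
    (hq : q < ((b : ℝ) ^ d)⁻¹ * (1 - q)) :
    Set.InjOn (fun x : Fin d → ℝ => ∑ p : Fin d, spreadDigits b q (x p) / (b : ℝ) ^ ((p : ℕ) + 1))
      (Set.univ.pi fun _ => Set.Icc 0 1) := by
  intro x hx y hy hxy
  rw [Set.mem_univ_pi] at hx hy
  have hq1 : q < 1 := by
    have : 0 < ((b : ℝ) ^ d)⁻¹ := by positivity
    nlinarith
  set D : (Fin d → ℝ) → ℕ → ℝ := fun z k => finOfDigits fun p => digits (z p / 2) b k
  have hsum : ∑' k, (D x k - D y k) * q ^ k = 0 := by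
    simp_rw [sub_mul]
    rw [(summable_finOfDigits_mul_pow hq0.le hq1 _).tsum_sub
      (summable_finOfDigits_mul_pow hq0.le hq1 _), ← sum_spreadDigits_div_pow hq0.le hq1,
      ← sum_spreadDigits_div_pow hq0.le hq1]
    exact sub_eq_zero.2 hxy
  have hD : (fun k => D x k - D y k) = 0 :=
    eq_zero_of_tsum_mul_pow_eq_zero (M := 1) hq0 hq1
      (fun k => abs_sub_le_of_nonneg_of_le (finOfDigits_nonneg _) (finOfDigits_lt_one _).le
        (finOfDigits_nonneg _) (finOfDigits_lt_one _).le)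
      (fun k hk => inv_pow_le_abs_finOfDigits_sub (sub_ne_zero.1 hk)) (by linarith) hsum
  funext p
  have hdigits : digits (x p / 2) b = digits (y p / 2) b := funext fun k =>
    congrFun (finOfDigits_injective (sub_eq_zero.1 (congrFun hD k))) p
  have := congrArg ofDigits hdigits
  rw [ofDigits_digits hb (half_mem_Ico_of_mem_Icc (hx p)),
    ofDigits_digits hb (half_mem_Ico_of_mem_Icc (hy p))] at this
  linarith

theorem stmt0 (d B : ℕ) (hB : 2 ≤ B) :
    ∃ ψ : ℝ → ℝ, MonotoneOn ψ (Set.Icc 0 1) ∧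
      ∀ f : (Fin d → ℝ) → ℝ, ∃ g : ℝ → ℝ,
        ∀ x : Fin d → ℝ, (∀ p, x p ∈ Set.Icc (0:ℝ) 1) →
          f x = g (∑ p : Fin d, ψ (x p) / (B : ℝ) ^ ((p : ℕ) + 1)) := by
  have : NeZero B := ⟨by omega⟩
  have hB' : (2 : ℝ) ≤ B := by exact_mod_cast hB
  have ht : 1 ≤ (B : ℝ) ^ d := one_le_pow₀ (by linarith)
  set q : ℝ := ((B : ℝ) ^ d * B ^ 2)⁻¹
  have hq0 : 0 < q := by positivity
  have hBq : B * q < 1 := by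
    simp only [q]
    rw [mul_inv_lt_iff₀ (by positivity)]
    nlinarith
  have hsep : q < ((B : ℝ) ^ d)⁻¹ * (1 - q) := by
    simp only [q]
    field_simp
    nlinarith [mul_le_mul_of_nonneg_left (show (4 : ℝ) ≤ B ^ 2 by nlinarith)
      (by linarith : (0 : ℝ) ≤ B ^ d)]
  set S : (Fin d → ℝ) → ℝ := fun x => ∑ p : Fin d, spreadDigits B q (x p) / (B : ℝ) ^ ((p : ℕ) + 1)
  have hinj : Set.InjOn S (Set.univ.pi fun _ => Set.Icc 0 1) :=
    injOn_sum_spreadDigits_div_pow (by omega) hq0 hsep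
  refine ⟨spreadDigits B q, (strictMonoOn_spreadDigits (by omega) hq0 hBq).monotoneOn,
    fun f => ⟨f ∘ Function.invFunOn S (Set.univ.pi fun _ => Set.Icc 0 1), fun x hx => ?_⟩⟩
  exact (congrArg f (hinj.leftInvOn_invFunOn (Set.mem_univ_pi.2 hx))).symm
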